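/- Let μ be a probability distribution of (X, Y) on [1,∞) × ℝ^{d-1}. Then the following are equivalent: (a) μ is homogeneous of order −α with respect to its first component, i.e. μ(λA × B) = λ^{−α} μ(A × B) for all λ ≥ 1 and Borel sets A ⊆ [1,∞), B ⊆ ℝ^{d-1}; (b) X and Y are independent and X has the Pareto distribution with survival function x^{−α}. -/

import Mathlib

/-!
Both directions rest on one observation: a finite measure on `ℝ` is determined by its tails
`x ↦ ρ [x, ∞)`, and the Pareto law is the one with tails `max x 1 ^ (-α)`.
If `μ` is homogeneous and lives on `[1, ∞) × ℝ^{d-1}`, scaling `[1, ∞)` by `c ≥ 1` gives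
`μ ([c, ∞) × B) = c^{-α} μ (ℝ × B)`, so for every `B` the measure `A ↦ μ (A × B)` is
`μ (ℝ × B)` times the Pareto law. Conversely, the law of `X / λ` restricted to `[1, ∞)` has
tails `λ^{-α} max x 1 ^ (-α)` when `X` is Pareto and `λ ≥ 1`.
-/

open MeasureTheory Set ENNReal

/-- The Pareto distribution on `[1,∞)` with shape `α`, given by its density
`α x^{−α−1}` on `[1,∞)`; its survival function is `x^{−α}`. -/
noncomputable def paretoLaw (α : ℝ) : Measure ℝ :=
  MeasureTheory.volume.withDensity fun x =>
    ENNReal.ofReal (Set.indicator (Set.Ici 1) (fun x => α * x ^ (-α - 1)) x)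

lemma paretoLaw_apply (α : ℝ) {s : Set ℝ} (hs : MeasurableSet s) :
    paretoLaw α s = ∫⁻ x in s ∩ Ici 1, ENNReal.ofReal (α * x ^ (-α - 1)) := by
  have hdensity : (fun x => ENNReal.ofReal (indicator (Ici 1) (fun x => α * x ^ (-α - 1)) x))
      = indicator (Ici 1) (fun x => ENNReal.ofReal (α * x ^ (-α - 1))) := by
    ext x
    by_cases hx : x ∈ Ici (1 : ℝ) <;> simp [hx]
  rw [paretoLaw, withDensity_apply _ hs, hdensity, lintegral_indicator measurableSet_Ici,
    Measure.restrict_restrict measurableSet_Ici, inter_comm]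

lemma setLIntegral_Ici_pareto_density {α : ℝ} (hα : 0 < α) {c : ℝ} (hc : 0 < c) :
    ∫⁻ x in Ici c, ENNReal.ofReal (α * x ^ (-α - 1)) = ENNReal.ofReal (c ^ (-α)) := by
  have hint : IntegrableOn (fun x => α * x ^ (-α - 1)) (Ioi c) :=
    (integrableOn_Ioi_rpow_of_lt (by linarith) hc).const_mul α
  have hnonneg : 0 ≤ᵐ[volume.restrict (Ioi c)] fun x : ℝ => α * x ^ (-α - 1) := by
    filter_upwards [ae_restrict_mem measurableSet_Ioi] with x hx
    have : 0 < x := hc.trans hx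
    positivity
  rw [← setLIntegral_congr Ioi_ae_eq_Ici, ← ofReal_integral_eq_lintegral_ofReal hint hnonneg,
    integral_const_mul, integral_Ioi_rpow_of_lt (by linarith) hc, sub_add_cancel]
  congr 1
  field_simp

lemma paretoLaw_Ici {α : ℝ} (hα : 0 < α) (a : ℝ) :
    paretoLaw α (Ici a) = ENNReal.ofReal (max a 1 ^ (-α)) := by
  rw [paretoLaw_apply α measurableSet_Ici, Ici_inter_Ici,
    setLIntegral_Ici_pareto_density hα (one_pos.trans_le (le_max_right a 1))]

lemma isProbabilityMeasure_paretoLaw {α : ℝ} (hα : 0 < α) :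
    IsProbabilityMeasure (paretoLaw α) := by
  constructor
  rw [paretoLaw_apply α MeasurableSet.univ, univ_inter,
    setLIntegral_Ici_pareto_density hα one_pos, Real.one_rpow, ENNReal.ofReal_one]

lemma eq_smul_paretoLaw_of_measure_Ici {α : ℝ} (hα : 0 < α) {ρ : Measure ℝ}
    [IsFiniteMeasure ρ] (c : ℝ≥0∞) (h : ∀ x, ρ (Ici x) = c * ENNReal.ofReal (max x 1 ^ (-α))) :
    ρ = c • paretoLaw α :=
  Measure.ext_of_Ici _ _ fun x => by rw [h, Measure.smul_apply, smul_eq_mul, paretoLaw_Ici hα]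

lemma paretoLaw_image_mul {α : ℝ} (hα : 0 < α) {lam : ℝ} (hlam : 1 ≤ lam) {A : Set ℝ}
    (hA : MeasurableSet A) (hA1 : A ⊆ Ici 1) :
    paretoLaw α ((fun a => lam * a) '' A) = ENNReal.ofReal (lam ^ (-α)) * paretoLaw α A := by
  have hlam0 : 0 < lam := one_pos.trans_le hlam
  have := isProbabilityMeasure_paretoLaw hα
  have himage : ∀ s : Set ℝ, (fun a => lam * a) '' s = (fun x => lam⁻¹ * x) ⁻¹' s :=
    congrFun (image_eq_preimage_of_inverse (fun x => inv_mul_cancel_left₀ hlam0.ne' x)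
      (fun x => mul_inv_cancel_left₀ hlam0.ne' x))
  set ρ := ((paretoLaw α).map fun x => lam⁻¹ * x).restrict (Ici 1)
  have hρ : ρ = ENNReal.ofReal (lam ^ (-α)) • paretoLaw α := by
    refine eq_smul_paretoLaw_of_measure_Ici hα _ fun x => ?_
    have hscaled : 1 ≤ lam * max x 1 := one_le_mul_of_one_le_of_one_le hlam (le_max_right x 1)
    rw [Measure.restrict_apply measurableSet_Ici, Ici_inter_Ici,
      Measure.map_apply (measurable_const_mul _) measurableSet_Ici, ← himage,
      image_mul_left_Ici hlam0, paretoLaw_Ici hα, max_eq_left hscaled,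
      Real.mul_rpow hlam0.le (zero_le_one.trans (le_max_right x 1)),
      ENNReal.ofReal_mul (Real.rpow_nonneg hlam0.le _)]
  have hρA : ρ A = paretoLaw α ((fun a => lam * a) '' A) := by
    rw [Measure.restrict_apply hA, inter_eq_self_of_subset_left hA1,
      Measure.map_apply (measurable_const_mul _) hA, himage]
  rw [← hρA, hρ, Measure.smul_apply, smul_eq_mul]

section Homogeneous

variable {β : Type*} [MeasurableSpace β] {α : ℝ} {μ : Measure (ℝ × β)}

def IsFstHomogeneous (α : ℝ) (μ : Measure (ℝ × β)) : Prop :=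
  ∀ lam : ℝ, 1 ≤ lam → ∀ A : Set ℝ, MeasurableSet A → A ⊆ Ici 1 → ∀ B : Set β, MeasurableSet B →
    μ (((fun a => lam * a) '' A) ×ˢ B) = ENNReal.ofReal (lam ^ (-α)) * μ (A ×ˢ B)

lemma measure_inter_Ici_prod (hsupp : μ (Ici (1 : ℝ) ×ˢ (univ : Set β))ᶜ = 0)
    (s : Set ℝ) (B : Set β) : μ ((s ∩ Ici 1) ×ˢ B) = μ (s ×ˢ B) := by
  rw [← measure_inter_conull hsupp (s := s ×ˢ B), prod_inter_prod, inter_univ]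

lemma IsFstHomogeneous.measure_Ici_prod (h : IsFstHomogeneous α μ)
    (hsupp : μ (Ici (1 : ℝ) ×ˢ (univ : Set β))ᶜ = 0) {B : Set β} (hB : MeasurableSet B) (a : ℝ) :
    μ (Ici a ×ˢ B) = ENNReal.ofReal (max a 1 ^ (-α)) * μ.map Prod.snd B := by
  have hmarginal : μ (Ici 1 ×ˢ B) = μ.map Prod.snd B := by
    rw [← univ_inter (Ici 1), measure_inter_Ici_prod hsupp, univ_prod,
      Measure.map_apply measurable_snd hB]
  have hscale := h (max a 1) (le_max_right a 1) (Ici 1) measurableSet_Ici subset_rfl B hB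
  rw [image_mul_left_Ici (one_pos.trans_le (le_max_right a 1)), mul_one, hmarginal] at hscale
  rw [← measure_inter_Ici_prod hsupp, Ici_inter_Ici, ← hscale]

lemma IsFstHomogeneous.measure_prod [IsFiniteMeasure μ] (hα : 0 < α) (h : IsFstHomogeneous α μ)
    (hsupp : μ (Ici (1 : ℝ) ×ˢ (univ : Set β))ᶜ = 0) {A : Set ℝ} (hA : MeasurableSet A)
    {B : Set β} (hB : MeasurableSet B) :
    μ (A ×ˢ B) = paretoLaw α A * μ.map Prod.snd B := by
  set ρ := (μ.restrict (univ ×ˢ B)).map Prod.fst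
  have hρ : ∀ s, MeasurableSet s → ρ s = μ (s ×ˢ B) := fun s hs => by
    rw [Measure.map_apply measurable_fst hs, Measure.restrict_apply (measurable_fst hs),
      ← prod_univ, prod_inter_prod, inter_univ, univ_inter]
  have hρ_eq : ρ = μ.map Prod.snd B • paretoLaw α :=
    eq_smul_paretoLaw_of_measure_Ici hα _ fun x => by
      rw [hρ _ measurableSet_Ici, h.measure_Ici_prod hsupp hB, mul_comm]
  rw [← hρ A hA, hρ_eq, Measure.smul_apply, smul_eq_mul, mul_comm]

lemma IsFstHomogeneous.eq_paretoLaw_prod [IsFiniteMeasure μ] (hα : 0 < α)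
    (h : IsFstHomogeneous α μ) (hsupp : μ (Ici (1 : ℝ) ×ˢ (univ : Set β))ᶜ = 0) :
    μ = (paretoLaw α).prod (μ.map Prod.snd) := by
  have := isProbabilityMeasure_paretoLaw hα
  exact (Measure.prod_eq fun s t hs ht => h.measure_prod hα hsupp hs ht).symm

lemma isFstHomogeneous_paretoLaw_prod (hα : 0 < α) (ν : Measure β) [SFinite ν] :
    IsFstHomogeneous α ((paretoLaw α).prod ν) := fun lam hlam A hA hA1 B _ => by
  rw [Measure.prod_prod, Measure.prod_prod, paretoLaw_image_mul hα hlam hA hA1, mul_assoc]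

end Homogeneous

/-- Homogeneous distributions: a probability distribution `μ` of `(X,Y)` on
`[1,∞) × ℝ^{d-1}` is homogeneous of order `−α` w.r.t. its first component, i.e.
`μ(λA × B) = λ^{−α} μ(A × B)` for all `λ ≥ 1` and Borel `A ⊆ [1,∞)`, `B`, if and only if
`X ⟂ Y` with `X` Pareto(α)-distributed, i.e. `μ = P_α × μ_Y`. -/
theorem homogeneous_iff_pareto_product {m : ℕ} (α : ℝ) (hα : 0 < α)
    (μ : Measure (ℝ × (Fin m → ℝ))) [IsProbabilityMeasure μ]
    (hsupp : μ ((Set.Ici (1:ℝ)) ×ˢ (Set.univ : Set (Fin m → ℝ)))ᶜ = 0) :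
    (∀ lam : ℝ, 1 ≤ lam →
      ∀ A : Set ℝ, MeasurableSet A → A ⊆ Set.Ici 1 →
      ∀ B : Set (Fin m → ℝ), MeasurableSet B →
        μ (((fun a => lam * a) '' A) ×ˢ B) =
          ENNReal.ofReal (lam ^ (-α)) * μ (A ×ˢ B))
    ↔ μ = (paretoLaw α).prod (μ.map Prod.snd) := by
  refine ⟨fun h => IsFstHomogeneous.eq_paretoLaw_prod hα h hsupp, fun h => ?_⟩
  rw [h]
  exact isFstHomogeneous_paretoLaw_prod hα _
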